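/- Let I ⊆ J be two ideals of ℂ[x₁,...,x_n] each generated by powers of linear forms, with I generated by {ℓ_α^{d_α+1}} and J generated by the subfamily {ℓ_β^{d_β+1}} for β in a subset S, all d_α ≥ 1. If the (d_α+1)-st powers generate the same ideal (I = J at level +1), then the ideals generated by the d_α-th powers also coincide: ⟨ℓ_α^{d_α} : all α⟩ = ⟨ℓ_β^{d_β} : β ∈ S⟩. -/

import Mathlib

/-!
Write `J = ⟨ℓ_β^{d_β} : β ∈ S⟩`. Each generator `ℓ_β^{d_β+1}` of the hypothesis ideal lies in `J`
together with its partial derivatives, and by the Leibniz rule `∂(r f) = r ∂f + f ∂r` this passes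
to the whole ideal. Hence `∂_j ℓ_α^{d_α+1} = (d_α+1) (ℓ_α)_j ℓ_α^{d_α}` lies in `J`, and choosing
`j` with `(ℓ_α)_j ≠ 0` gives `ℓ_α^{d_α} ∈ J`.
-/

open MvPolynomial

/-- The linear form in ℂ[x₁,...,xₙ] with coefficient vector `v`. -/
noncomputable def linForm {n : ℕ} (v : Fin n → ℂ) : MvPolynomial (Fin n) ℂ :=
  ∑ i, C (v i) * X i

namespace Derivation

variable {R A : Type*} [CommSemiring R] [CommSemiring A] [Algebra R A] (D : Derivation R A A)

theorem apply_mem_of_mem_span {s : Set A} {J : Ideal A} (hs : s ⊆ J) (hDs : ∀ a ∈ s, D a ∈ J)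
    {f : A} (hf : f ∈ Ideal.span s) : D f ∈ J := by
  induction hf using Submodule.span_induction with
  | mem a ha => exact hDs a ha
  | zero => simp
  | add x y _ _ hx hy => rw [map_add]; exact J.add_mem hx hy
  | smul r x hx hDx =>
    rw [smul_eq_mul, leibniz]
    exact J.add_mem (J.smul_mem r hDx) (J.mul_mem_right _ (Ideal.span_le.mpr hs hx))

theorem apply_pow_succ_mem {J : Ideal A} {a : A} (k : ℕ) (ha : a ^ k ∈ J) :
    D (a ^ (k + 1)) ∈ J := by
  rw [leibniz_pow, Nat.add_sub_cancel, smul_eq_mul, nsmul_eq_mul]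
  exact J.mul_mem_left _ (J.mul_mem_right _ ha)

end Derivation

theorem pderiv_linForm {n : ℕ} (v : Fin n → ℂ) (j : Fin n) :
    pderiv j (linForm v) = C (v j) := by
  simp [linForm, Pi.single_apply, eq_comm]

theorem pderiv_linForm_pow_succ {n : ℕ} (v : Fin n → ℂ) (j : Fin n) (k : ℕ) :
    pderiv j (linForm v ^ (k + 1)) = C (((k : ℂ) + 1) * v j) * linForm v ^ k := by
  rw [Derivation.leibniz_pow, pderiv_linForm, Nat.add_sub_cancel, smul_eq_mul, nsmul_eq_mul,
    C_mul, ← map_natCast (C : ℂ →+* MvPolynomial (Fin n) ℂ)]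
  push_cast
  ring

theorem linForm_pow_mem_of_pderiv_mem {n : ℕ} {v : Fin n → ℂ} {j : Fin n} (hj : v j ≠ 0)
    {J : Ideal (MvPolynomial (Fin n) ℂ)} (k : ℕ) (h : pderiv j (linForm v ^ (k + 1)) ∈ J) :
    linForm v ^ k ∈ J := by
  have hc : ((k : ℂ) + 1) * v j ≠ 0 := mul_ne_zero (Nat.cast_add_one_ne_zero k) hj
  have hk := J.mul_mem_left (C (((k : ℂ) + 1) * v j)⁻¹) h
  rwa [pderiv_linForm_pow_succ, ← mul_assoc, ← C_mul, inv_mul_cancel₀ hc, C_1, one_mul] at hk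

theorem stmt_5_general {n : ℕ} {ι : Type*} (ℓ : ι → (Fin n → ℂ)) (d : ι → ℕ) (S : Set ι)
    (hne : ∀ α, ℓ α ≠ 0)
    (h : Ideal.span (Set.range fun α => linForm (ℓ α) ^ (d α + 1))
        = Ideal.span ((fun β => linForm (ℓ β) ^ (d β + 1)) '' S)) :
    Ideal.span (Set.range fun α => linForm (ℓ α) ^ (d α))
      = Ideal.span ((fun β => linForm (ℓ β) ^ (d β)) '' S) := by
  set J := Ideal.span ((fun β => linForm (ℓ β) ^ (d β)) '' S)
  have hgen : ∀ β ∈ S, linForm (ℓ β) ^ d β ∈ J := fun β hβ => Ideal.subset_span ⟨β, hβ, rfl⟩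
  refine le_antisymm (Ideal.span_le.mpr ?_) (Ideal.span_mono (Set.image_subset_range _ _))
  rintro _ ⟨α, rfl⟩
  obtain ⟨j, hj⟩ := Function.ne_iff.mp (hne α)
  have hα : linForm (ℓ α) ^ (d α + 1) ∈
      Ideal.span ((fun β => linForm (ℓ β) ^ (d β + 1)) '' S) := h ▸ Ideal.subset_span ⟨α, rfl⟩
  refine linForm_pow_mem_of_pderiv_mem hj _ ((pderiv j).apply_mem_of_mem_span ?_ ?_ hα)
  · rintro _ ⟨β, hβ, rfl⟩
    exact Ideal.pow_mem_of_pow_mem _ (hgen β hβ) (Nat.le_succ _)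
  · rintro _ ⟨β, hβ, rfl⟩
    exact (pderiv j).apply_pow_succ_mem _ (hgen β hβ)

/-- given a family of nonzero linear forms ℓ_α with exponents d_α ≥ 1 and a
subfamily indexed by S, if the ideals generated by the (d_α+1)-st powers coincide,
then so do the ideals generated by the d_α-th powers. -/
theorem stmt_5 {n : ℕ} {ι : Type*} (ℓ : ι → (Fin n → ℂ)) (d : ι → ℕ) (S : Set ι)
    (hne : ∀ α, ℓ α ≠ 0) (hd : ∀ α, 1 ≤ d α)
    (h : Ideal.span (Set.range fun α => linForm (ℓ α) ^ (d α + 1))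
        = Ideal.span ((fun β => linForm (ℓ β) ^ (d β + 1)) '' S)) :
    Ideal.span (Set.range fun α => linForm (ℓ α) ^ (d α))
      = Ideal.span ((fun β => linForm (ℓ β) ^ (d β)) '' S) :=
  stmt_5_general ℓ d S hne h
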